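/- Let γ : ℝ → ℝ be 1-periodic with ‖γ‖_∞ ≤ c'd and suppose ρ ∫₀¹ γ(z)² dz = 1. If h is a 1-periodic density with bounded derivative and |γ(z)| ≤ c''d³/|z| for z ∈ [cd, 1/2] (and symmetrically near 1), then |ρ∫₀¹ γ(x−z)² h(z) dz − h(x)| → 0 uniformly in x as d → 0, with ρ ≍ d^{−3}. -/

import Mathlib

/-!
Write `f = γ_d²`. Since `f` and `h` are 1-periodic and `ρ ∫₀¹ f = 1`, the error
`ρ ∫₀¹ f(x - z) h(z) dz - h(x)` equals `ρ ∫_{-1/2}^{1/2} f(v) (h(x - v) - h(x)) dv`,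
which is at most `ρ ‖h'‖_∞ ∫_{-1/2}^{1/2} f(v) |v| dv`. Pointwise `f(v) |v| ≤ cd f(v)`
for `|v| ≤ cd`, while the decay bound gives `f(v) |v| ≤ c''² d⁶ / |v| ≤ c''² d⁵ / c`
otherwise. Hence the error is at most `‖h'‖_∞ (cd + ρ c''² d⁵ / c) = O(d)`,
because `ρ ≤ c₂ d⁻³`.
-/

open Real Filter intervalIntegral
open MeasureTheory (volume)
open Function Topology

theorem tendstoUniformly_of_eventually_dist_le {ι α β : Type*} [PseudoMetricSpace β]
    {l : Filter ι} {F : ι → α → β} {f : α → β} {B : ι → ℝ}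
    (hB : Tendsto B l (𝓝 0)) (hFB : ∀ᶠ i in l, ∀ x, dist (f x) (F i x) ≤ B i) :
    TendstoUniformly F f l := by
  rw [Metric.tendstoUniformly_iff]
  intro ε hε
  filter_upwards [hFB, hB.eventually (gt_mem_nhds hε)] with i hi hBi x
  exact (hi x).trans_lt hBi

theorem Function.Periodic.abs_le_div_abs_of_decay {g : ℝ → ℝ} (hg : Periodic g 1) {r K : ℝ}
    (hdecay : ∀ z ∈ Set.Icc r (1 / 2), |g z| ≤ K / |z|)
    (hdecay' : ∀ z ∈ Set.Icc (1 / 2) (1 - r), |g z| ≤ K / |1 - z|)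
    {v : ℝ} (hv : |v| ≤ 1 / 2) (hrv : r ≤ |v|) : |g v| ≤ K / |v| := by
  rcases le_or_gt 0 v with hv0 | hv0
  · rw [abs_of_nonneg hv0] at hv hrv
    exact hdecay v ⟨hrv, hv⟩
  · rw [abs_of_neg hv0] at hv hrv
    have hmem : v + 1 ∈ Set.Icc (1 / 2) (1 - r) := ⟨by linarith, by linarith⟩
    simpa [← hg v, abs_of_neg hv0, abs_neg] using hdecay' (v + 1) hmem

theorem sq_mul_abs_le_of_abs_le_div {a v r K : ℝ} (hr : 0 < r)
    (ha : r ≤ |v| → |a| ≤ K / |v|) : a ^ 2 * |v| ≤ r * a ^ 2 + K ^ 2 / r := by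
  rcases le_or_gt |v| r with hvr | hrv
  · have : a ^ 2 * |v| ≤ a ^ 2 * r := mul_le_mul_of_nonneg_left hvr (sq_nonneg a)
    have : 0 ≤ K ^ 2 / r := by positivity
    linarith
  · have hv : 0 < |v| := hr.trans hrv
    have hsq : a ^ 2 ≤ (K / |v|) ^ 2 := by
      rw [← sq_abs]
      exact pow_le_pow_left₀ (abs_nonneg a) (ha hrv.le) 2
    calc a ^ 2 * |v| ≤ (K / |v|) ^ 2 * |v| := mul_le_mul_of_nonneg_right hsq hv.le
      _ = K ^ 2 / |v| := by field_simp
      _ ≤ K ^ 2 / r := div_le_div_of_nonneg_left (sq_nonneg K) hr hrv.le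
      _ ≤ r * a ^ 2 + K ^ 2 / r := le_add_of_nonneg_left (by positivity)

theorem Function.Periodic.intervalIntegral_comp_sub_left_eq {E : Type*} [NormedAddCommGroup E]
    [NormedSpace ℝ E] {g : ℝ → E} {T : ℝ} (hg : Periodic g T) (x a : ℝ) :
    ∫ z in 0..T, g (x - z) = ∫ z in a..a + T, g z := by
  rw [integral_comp_sub_left, sub_zero, ← hg.intervalIntegral_add_eq (x - T) a, sub_add_cancel]

theorem abs_mul_integral_comp_sub_mul_sub_le {f h : ℝ → ℝ} {ρ r E : ℝ} {L : NNReal}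
    (hf : Periodic f 1) (hf0 : ∀ z, 0 ≤ f z) (hnorm : ρ * ∫ z in 0..1, f z = 1)
    (hh : Periodic h 1) (hL : LipschitzWith L h)
    (hfr : ∀ v, |v| ≤ 1 / 2 → f v * |v| ≤ r * f v + E) (x : ℝ) :
    |ρ * (∫ z in 0..1, f (x - z) * h z) - h x| ≤ L * (r + ρ * E) := by
  have hfi : IntervalIntegrable f volume 0 1 :=
    intervalIntegrable_of_integral_ne_zero (right_ne_zero_of_mul_eq_one hnorm)
  have hρ : 0 < ρ := by
    have : 0 ≤ ∫ z in 0..1, f z := integral_nonneg zero_le_one fun z _ => hf0 z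
    by_contra! hρ
    nlinarith
  have hfi' : IntervalIntegrable f volume (-(1 / 2)) (1 / 2) :=
    hf.intervalIntegrable₀ one_ne_zero hfi _ _
  have hmass : ∫ v in -(1 / 2)..1 / 2, f v = ρ⁻¹ := by
    have := hf.intervalIntegral_add_eq (-(1 / 2)) 0
    norm_num at this
    rw [this]
    exact eq_inv_of_mul_eq_one_right hnorm
  have hconv : ∫ z in 0..1, f (x - z) * h z = ∫ v in -(1 / 2)..1 / 2, f v * h (x - v) := by
    have hφ : Periodic (fun v => f v * h (x - v)) 1 := fun v => by
      simp only [hf v, sub_add_eq_sub_sub, hh.sub_eq]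
    have := hφ.intervalIntegral_comp_sub_left_eq x (-(1 / 2))
    norm_num at this
    exact this
  have hdiff : ρ * (∫ z in 0..1, f (x - z) * h z) - h x
      = ρ * ∫ v in -(1 / 2)..1 / 2, f v * (h (x - v) - h x) := by
    have hfh : IntervalIntegrable (fun v => f v * h (x - v)) volume (-(1 / 2)) (1 / 2) :=
      hfi'.mul_continuousOn (hL.continuous.comp (continuous_sub_left x)).continuousOn
    simp only [mul_sub]
    rw [integral_sub hfh (hfi'.mul_const _), integral_mul_const, hmass, hconv, mul_sub,
      mul_inv_cancel_left₀ hρ.ne']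
  have hpt : ∀ v ∈ Set.Ioc (-(1 / 2) : ℝ) (1 / 2),
      ‖f v * (h (x - v) - h x)‖ ≤ L * (r * f v + E) := by
    intro v hv
    have hv' : |v| ≤ 1 / 2 := abs_le.mpr ⟨hv.1.le, hv.2⟩
    have hlip : |h (x - v) - h x| ≤ L * |v| := by
      simpa [Real.dist_eq] using hL.dist_le_mul (x - v) x
    calc ‖f v * (h (x - v) - h x)‖ = f v * |h (x - v) - h x| := by
          rw [Real.norm_eq_abs, abs_mul, abs_of_nonneg (hf0 v)]
      _ ≤ f v * (L * |v|) := mul_le_mul_of_nonneg_left hlip (hf0 v)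
      _ = L * (f v * |v|) := by ring
      _ ≤ L * (r * f v + E) := mul_le_mul_of_nonneg_left (hfr v hv') L.coe_nonneg
  calc |ρ * (∫ z in 0..1, f (x - z) * h z) - h x|
      = ρ * ‖∫ v in -(1 / 2)..1 / 2, f v * (h (x - v) - h x)‖ := by
        rw [hdiff, abs_mul, abs_of_pos hρ, Real.norm_eq_abs]
    _ ≤ ρ * ∫ v in -(1 / 2)..1 / 2, L * (r * f v + E) := by
        gcongr
        exact norm_integral_le_of_norm_le (by norm_num) (MeasureTheory.ae_of_all _ hpt)
          ((hfi'.const_mul r).add intervalIntegrable_const |>.const_mul _)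
    _ = L * (r + ρ * E) := by
        rw [integral_const_mul, integral_add (hfi'.const_mul r) intervalIntegrable_const,
          integral_const_mul, hmass, intervalIntegral.integral_const]
        field_simp
        ring

theorem abs_mul_integral_sq_comp_sub_mul_sub_le {g h : ℝ → ℝ} {ρ r K : ℝ} {L : NNReal}
    (hg : Periodic g 1) (hnorm : ρ * ∫ z in 0..1, g z ^ 2 = 1) (hr : 0 < r)
    (hdecay : ∀ z ∈ Set.Icc r (1 / 2), |g z| ≤ K / |z|)
    (hdecay' : ∀ z ∈ Set.Icc (1 / 2) (1 - r), |g z| ≤ K / |1 - z|)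
    (hh : Periodic h 1) (hL : LipschitzWith L h) (x : ℝ) :
    |ρ * (∫ z in 0..1, g (x - z) ^ 2 * h z) - h x| ≤ L * (r + ρ * (K ^ 2 / r)) :=
  abs_mul_integral_comp_sub_mul_sub_le (hg.comp (· ^ 2)) (fun z => sq_nonneg (g z)) hnorm hh hL
    (fun _ hv => sq_mul_abs_le_of_abs_le_div hr (hg.abs_le_div_abs_of_decay hdecay hdecay' hv)) x

theorem variance_identification_general
    (γ : ℝ → ℝ → ℝ) (ρ : ℝ → ℝ) (c c'' c₁ c₂ : ℝ)
    (hc : 0 < c)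
    (hγper : ∀ d > (0:ℝ), Function.Periodic (γ d) 1)
    (hnorm : ∀ d > (0:ℝ), ρ d * ∫ z in (0:ℝ)..1, (γ d z) ^ 2 = 1)
    (hρ : ∀ d > (0:ℝ), c₁ * d ^ (-3 : ℤ) ≤ ρ d ∧ ρ d ≤ c₂ * d ^ (-3 : ℤ))
    (hdecay : ∀ d > (0:ℝ), ∀ z ∈ Set.Icc (c * d) (1 / 2 : ℝ),
      |γ d z| ≤ c'' * d ^ 3 / |z|)
    (hdecay' : ∀ d > (0:ℝ), ∀ z ∈ Set.Icc (1 / 2 : ℝ) (1 - c * d),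
      |γ d z| ≤ c'' * d ^ 3 / |1 - z|)
    (h : ℝ → ℝ) (hper : Function.Periodic h 1)
    (hdiff : Differentiable ℝ h) (Ch' : ℝ) (hh'bd : ∀ x, |deriv h x| ≤ Ch') :
    TendstoUniformly
      (fun d x => ρ d * ∫ z in (0:ℝ)..1, (γ d (x - z)) ^ 2 * h z)
      h (nhdsWithin 0 (Set.Ioi 0)) := by
  have hCh' : 0 ≤ Ch' := (abs_nonneg _).trans (hh'bd 0)
  have hLip : LipschitzWith Ch'.toNNReal h := lipschitzWith_of_nnnorm_deriv_le hdiff fun x => by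
    rw [← NNReal.coe_le_coe, coe_nnnorm, Real.coe_toNNReal _ hCh']
    exact hh'bd x
  have hρE : ∀ d > 0, ρ d * ((c'' * d ^ 3) ^ 2 / (c * d)) ≤ c₂ * c'' ^ 2 / c * d ^ 2 := by
    intro d hd
    calc ρ d * ((c'' * d ^ 3) ^ 2 / (c * d))
        ≤ c₂ * d ^ (-3 : ℤ) * ((c'' * d ^ 3) ^ 2 / (c * d)) := by
          gcongr
          exact (hρ d hd).2
      _ = c₂ * c'' ^ 2 / c * d ^ 2 := by
          rw [zpow_neg, zpow_ofNat]
          field_simp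
  refine tendstoUniformly_of_eventually_dist_le
    (B := fun d => Ch' * (c * d + c₂ * c'' ^ 2 / c * d ^ 2)) ?_ ?_
  · exact tendsto_nhdsWithin_of_tendsto_nhds <| Continuous.tendsto' (by fun_prop) 0 0 (by simp)
  · filter_upwards [self_mem_nhdsWithin] with d hd x
    rw [dist_comm, Real.dist_eq]
    calc |ρ d * (∫ z in 0..1, γ d (x - z) ^ 2 * h z) - h x|
        ≤ Ch' * (c * d + ρ d * ((c'' * d ^ 3) ^ 2 / (c * d))) := by
          simpa only [Real.coe_toNNReal _ hCh'] using abs_mul_integral_sq_comp_sub_mul_sub_le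
            (hγper d hd) (hnorm d hd) (mul_pos hc hd) (hdecay d hd) (hdecay' d hd) hper hLip x
      _ ≤ Ch' * (c * d + c₂ * c'' ^ 2 / c * d ^ 2) := by
          have := hρE d hd
          gcongr

/-- Variance identification in the fluctuation theorem: for particle displacement
functions `γ_d` with `‖γ_d‖_∞ ≤ c'd`, normalization `ρ(d) ∫₀¹ γ_d² = 1`,
`ρ(d) ≍ d⁻³`, and decay `|γ_d(z)| ≤ c''d³/|z|` away from `0` (and symmetrically
near `1`), one has `ρ(d) ∫₀¹ γ_d(x-z)² h(z) dz → h(x)` uniformly in `x` as `d → 0`,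
for any 1-periodic density `h` with bounded derivative. -/
theorem variance_identification
    (γ : ℝ → ℝ → ℝ) (ρ : ℝ → ℝ) (c c' c'' c₁ c₂ : ℝ)
    (hc : 0 < c) (hc' : 0 < c') (hc'' : 0 < c'') (hc₁ : 0 < c₁) (hc₂ : 0 < c₂)
    (hγper : ∀ d > (0:ℝ), Function.Periodic (γ d) 1)
    (hγbd : ∀ d > (0:ℝ), ∀ z, |γ d z| ≤ c' * d)
    (hnorm : ∀ d > (0:ℝ), ρ d * ∫ z in (0:ℝ)..1, (γ d z) ^ 2 = 1)
    (hρ : ∀ d > (0:ℝ), c₁ * d ^ (-3 : ℤ) ≤ ρ d ∧ ρ d ≤ c₂ * d ^ (-3 : ℤ))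
    (hdecay : ∀ d > (0:ℝ), ∀ z ∈ Set.Icc (c * d) (1 / 2 : ℝ),
      |γ d z| ≤ c'' * d ^ 3 / |z|)
    (hdecay' : ∀ d > (0:ℝ), ∀ z ∈ Set.Icc (1 / 2 : ℝ) (1 - c * d),
      |γ d z| ≤ c'' * d ^ 3 / |1 - z|)
    (h : ℝ → ℝ) (hper : Function.Periodic h 1) (hnn : ∀ x, 0 ≤ h x)
    (hdens : ∫ x in (0:ℝ)..1, h x = 1)
    (hdiff : Differentiable ℝ h) (Ch' : ℝ) (hh'bd : ∀ x, |deriv h x| ≤ Ch') :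
    TendstoUniformly
      (fun d x => ρ d * ∫ z in (0:ℝ)..1, (γ d (x - z)) ^ 2 * h z)
      h (nhdsWithin 0 (Set.Ioi 0)) :=
  variance_identification_general γ ρ c c'' c₁ c₂ hc hγper hnorm hρ hdecay hdecay' h hper hdiff Ch'
    hh'bd
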